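/- Let G and H be finite connected simple graphs, fix a root (r_G, r_H) of G□H, and let S and T be disjoint subsets of V(H) such that every i ∈ S is adjacent in H to every j ∈ T. Let c be a pebbling configuration on G□H such that: (i) Σ_{j∈V(H)} ⌊c̃_j / π(G)⌋ ≥ π(H) − |T|; (ii) for every i ∈ S, c̃_i − extra_i ≥ |V(G)|; and (iii) Σ_{i∈S} ⌊extra_i / 2⌋ ≥ Σ_{j∈T} (π(G) − extra_j). Then c is (r_G, r_H)-solvable. -/

import Mathlib

open SimpleGraph Finset

/-- A single pebbling move on `G`: remove two pebbles from a vertex `v` with at least two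
pebbles and add one pebble to an adjacent vertex `w`. -/
def PebblingMove {V : Type*} (G : SimpleGraph V) (c c' : V → ℕ) : Prop :=
  ∃ v w, G.Adj v w ∧ 2 ≤ c v ∧ c' v = c v - 2 ∧ c' w = c w + 1 ∧
    ∀ u, u ≠ v → u ≠ w → c' u = c u

/-- Some finite sequence of pebbling moves starting from `c` places at least `t` pebbles
on the vertex `r`. -/
def NSolvable {V : Type*} (G : SimpleGraph V) (c : V → ℕ) (r : V) (t : ℕ) : Prop :=
  ∃ c', Relation.ReflTransGen (PebblingMove G) c c' ∧ t ≤ c' r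

/-- A configuration `c` is `r`-solvable. -/
def Solvable {V : Type*} (G : SimpleGraph V) (c : V → ℕ) (r : V) : Prop :=
  NSolvable G c r 1

/-- The pebbling number `π(G)`: least `k` such that every configuration of size `k` is
`r`-solvable for every root `r`. -/
noncomputable def pebblingNumber {V : Type*} (G : SimpleGraph V) [Fintype V] : ℕ :=
  sInf {k | ∀ c : V → ℕ, (∑ v, c v) = k → ∀ r, Solvable G c r}

/-- The 2-pebbling number `π₂(G, s)`: least `m` such that for every root `r`, every
configuration of size at least `m` with support of size exactly `s` can place two pebbles
on `r`. -/
noncomputable def twoPebblingNumber {V : Type*} (G : SimpleGraph V) [Fintype V] (s : ℕ) : ℕ :=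
  sInf {m | ∀ (r : V) (c : V → ℕ), m ≤ ∑ v, c v →
    (Finset.univ.filter fun v => 1 ≤ c v).card = s → NSolvable G c r 2}

/-
Pebbles are first moved one at a time from `S`-slices to `T`-slices. Only pairs of extra pebbles
are spent, so every `S`-slice keeps its `G`-sets, and by (ii) a slice with a pair left to spend
holds more than `|V(G)|` pebbles, hence a vertex `(a, i)` with two of them; `(a, i)` is adjacent
to `(a, j)` for every `j ∈ T`. By (iii) this completes one more set in every `T`-slice, so
afterwards slice `j` holds at least `π(G) * d j` pebbles, where `d j = ⌊c̃_j / π(G)⌋ + [j ∈ T]`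
has total at least `π(H)` by (i). Inside each slice these pebbles bring `d j` pebbles to
`(r_G, j)`, and the `H`-moves that solve `d` for the root `r_H` are then replayed in the copy
`{r_G} × H`.
-/

section Moves

variable {V W : Type*} {G : SimpleGraph V} {G' : SimpleGraph W}

theorem PebblingMove.add_right {c c' : V → ℕ} (h : PebblingMove G c c') (d : V → ℕ) :
    PebblingMove G (c + d) (c' + d) := by
  obtain ⟨v, w, hvw, h2, hv, hw, ho⟩ := h
  refine ⟨v, w, hvw, le_add_right h2, ?_, ?_, fun u hu hu' => ?_⟩
  · simp only [Pi.add_apply, hv]; omega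
  · simp only [Pi.add_apply, hw]; omega
  · simp only [Pi.add_apply, ho u hu hu']

theorem PebblingMove.add_left {c c' : V → ℕ} (h : PebblingMove G c c') (d : V → ℕ) :
    PebblingMove G (d + c) (d + c') := by
  simpa only [add_comm d] using h.add_right d

theorem PebblingMove.single [DecidableEq V] {v w : V} (h : G.Adj v w) :
    PebblingMove G (Pi.single v 2) (Pi.single w 1) :=
  ⟨v, w, h, by simp, by simp [h.ne'], by simp [h.ne'], fun u hv hw => by simp [hv, hw]⟩

theorem PebblingMove.map (f : G ↪g G') {c c' : V → ℕ} (h : PebblingMove G c c') :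
    PebblingMove G' (Function.extend f c 0) (Function.extend f c' 0) := by
  obtain ⟨v, w, hvw, h2, hv, hw, ho⟩ := h
  have hf := f.injective
  refine ⟨f v, f w, f.map_adj_iff.2 hvw, ?_, ?_, ?_, fun u hu hu' => ?_⟩
  · simpa [hf.extend_apply] using h2
  · simpa [hf.extend_apply] using hv
  · simpa [hf.extend_apply] using hw
  · by_cases hfu : ∃ x, f x = u
    · obtain ⟨x, rfl⟩ := hfu
      simp only [hf.extend_apply]
      exact ho x (ne_of_apply_ne f hu) (ne_of_apply_ne f hu')
    · simp only [Function.extend_apply' _ _ _ hfu]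

theorem PebblingMove.reflTransGen_add {c₁ c₁' c₂ c₂' : V → ℕ}
    (h₁ : Relation.ReflTransGen (PebblingMove G) c₁ c₁')
    (h₂ : Relation.ReflTransGen (PebblingMove G) c₂ c₂') :
    Relation.ReflTransGen (PebblingMove G) (c₁ + c₂) (c₁' + c₂') :=
  (h₁.lift (· + c₂) fun _ _ h => h.add_right c₂).trans
    (h₂.lift (c₁' + ·) fun _ _ h => h.add_left c₁')

theorem PebblingMove.reflTransGen_sum {ι : Type*} (s : Finset ι) {f f' : ι → V → ℕ}
    (h : ∀ i ∈ s, Relation.ReflTransGen (PebblingMove G) (f i) (f' i)) :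
    Relation.ReflTransGen (PebblingMove G) (∑ i ∈ s, f i) (∑ i ∈ s, f' i) := by
  induction s using Finset.cons_induction with
  | empty => exact .refl
  | cons i s hi ih =>
    simp only [sum_cons]
    exact reflTransGen_add (h i (mem_cons_self i s))
      (ih fun j hj => h j (mem_cons_of_mem hj))

theorem PebblingMove.reflTransGen_map (f : G ↪g G') {c c' : V → ℕ}
    (h : Relation.ReflTransGen (PebblingMove G) c c') :
    Relation.ReflTransGen (PebblingMove G') (Function.extend f c 0) (Function.extend f c' 0) :=
  h.lift _ fun _ _ h => h.map f

variable {c c₁ c₂ : V → ℕ} {r : V} {t t₁ t₂ : ℕ}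

theorem NSolvable.of_reflTransGen {c' : V → ℕ} (h : Relation.ReflTransGen (PebblingMove G) c c')
    (h' : NSolvable G c' r t) : NSolvable G c r t :=
  let ⟨c'', h'', ht⟩ := h'
  ⟨c'', h.trans h'', ht⟩

theorem NSolvable.add (h₁ : NSolvable G c₁ r t₁) (h₂ : NSolvable G c₂ r t₂) :
    NSolvable G (c₁ + c₂) r (t₁ + t₂) :=
  let ⟨c₁', h₁, ht₁⟩ := h₁
  let ⟨c₂', h₂, ht₂⟩ := h₂
  ⟨c₁' + c₂', PebblingMove.reflTransGen_add h₁ h₂, Nat.add_le_add ht₁ ht₂⟩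

theorem NSolvable.mono (hle : c₁ ≤ c₂) (h : NSolvable G c₁ r t) : NSolvable G c₂ r t := by
  simpa [add_tsub_cancel_of_le hle] using h.add (⟨c₂ - c₁, .refl, Nat.zero_le _⟩ : NSolvable G _ r 0)

theorem NSolvable.map (f : G ↪g G') (h : NSolvable G c r t) :
    NSolvable G' (Function.extend f c 0) (f r) t :=
  let ⟨c', h, ht⟩ := h
  ⟨_, PebblingMove.reflTransGen_map f h, by rwa [f.injective.extend_apply]⟩

theorem NSolvable.of_adj {v w : V} (h : G.Adj v w) (ht : 2 * t ≤ c v) : NSolvable G c w t := by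
  classical
  have hsingle : ∀ n, NSolvable G (Pi.single v (2 * n)) w n := by
    intro n
    induction n with
    | zero => exact ⟨_, .refl, Nat.zero_le _⟩
    | succ n ih =>
      rw [mul_add, mul_one, Pi.single_add]
      exact ih.add (⟨_, .single (.single h), by simp⟩ : NSolvable G (Pi.single v 2) w 1)
  refine (hsingle t).mono fun u => ?_
  by_cases hu : u = v
  · subst hu; simpa using ht
  · simp [hu]

theorem NSolvable.of_walk {v : V} (p : G.Walk v r) (ht : 2 ^ p.length * t ≤ c v) :
    NSolvable G c r t := by
  induction p generalizing c with
  | nil => exact ⟨c, .refl, by simpa using ht⟩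
  | cons h q ih =>
    rw [Walk.length_cons, pow_succ, mul_comm _ 2, mul_assoc] at ht
    obtain ⟨c', hc', hw⟩ := NSolvable.of_adj h ht
    exact .of_reflTransGen hc' (ih hw)

end Moves

section PebblingNumber

variable {V : Type*} [Fintype V] {G : SimpleGraph V}

theorem exists_le_sum_eq {c : V → ℕ} {k : ℕ} (h : k ≤ ∑ v, c v) :
    ∃ c₁ ≤ c, ∑ v, c₁ v = k := by
  classical
  induction k with
  | zero => exact ⟨0, fun _ => Nat.zero_le _, by simp⟩
  | succ k ih =>
    obtain ⟨c₁, hle, hsum⟩ := ih (by omega)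
    obtain ⟨v, -, hv⟩ := exists_lt_of_sum_lt (hsum.trans_lt h)
    refine ⟨c₁ + Pi.single v 1, fun u => ?_, by simp [sum_add_distrib, hsum]⟩
    by_cases hu : u = v
    · subst hu; simpa using hv
    · simpa [hu] using hle u

theorem solvable_of_card_mul_two_pow_le (hG : G.Connected) {c : V → ℕ}
    (h : Fintype.card V * 2 ^ Fintype.card V ≤ ∑ v, c v) (r : V) : Solvable G c r := by
  have : Nonempty V := hG.nonempty
  obtain ⟨v, -, hv⟩ := exists_le_of_sum_le univ_nonempty
    (f := fun _ => 2 ^ Fintype.card V) (by simpa using h)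
  obtain ⟨p, hp⟩ := (hG.preconnected v r).exists_isPath
  exact .of_walk p (by simpa using (Nat.pow_le_pow_right two_pos hp.length_lt.le).trans hv)

theorem solvable_of_sum_eq_pebblingNumber (hG : G.Connected) {c : V → ℕ}
    (h : ∑ v, c v = pebblingNumber G) (r : V) : Solvable G c r :=
  Nat.sInf_mem (s := {k | ∀ c : V → ℕ, (∑ v, c v) = k → ∀ r, Solvable G c r})
    ⟨_, fun _ hc => solvable_of_card_mul_two_pow_le hG hc.ge⟩ c h r

theorem nsolvable_of_pebblingNumber_mul_le (hG : G.Connected) {c : V → ℕ} {t : ℕ}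
    (h : pebblingNumber G * t ≤ ∑ v, c v) (r : V) : NSolvable G c r t := by
  induction t generalizing c with
  | zero => exact ⟨c, .refl, Nat.zero_le _⟩
  | succ t ih =>
    obtain ⟨c₁, hle, hsum⟩ := exists_le_sum_eq ((Nat.le_mul_of_pos_right _ t.succ_pos).trans h)
    have hrest : pebblingNumber G * t ≤ ∑ v, (c - c₁) v := by
      rw [Pi.sub_def, sum_tsub_distrib _ fun v _ => hle v, hsum]
      rw [mul_add_one] at h
      omega
    simpa [add_tsub_cancel_of_le hle, add_comm 1] using
      (solvable_of_sum_eq_pebblingNumber hG hsum r).add (ih hrest)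

end PebblingNumber

theorem Finset.sum_eq_sum_add_one_of_eq_add_one {ι : Type*} {s : Finset ι} {a : ι} (ha : a ∈ s)
    {f g : ι → ℕ} (hfa : f a = g a + 1) (hfg : ∀ k ∈ s, k ≠ a → f k = g k) :
    ∑ k ∈ s, f k = ∑ k ∈ s, g k + 1 := by
  classical
  rw [← add_sum_erase s f ha, ← add_sum_erase s g ha,
    sum_congr rfl fun k hk => hfg k (mem_of_mem_erase hk) (ne_of_mem_erase hk), hfa]
  ring

section BoxProd

variable {α β : Type*} {G : SimpleGraph α} {H : SimpleGraph β}

theorem extend_boxProdLeft_apply [DecidableEq β] (j : β) (s : α → ℕ) (x : α) (k : β) :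
    Function.extend (boxProdLeft G H j) s 0 (x, k) = if k = j then s x else 0 := by
  split_ifs with h
  · subst h; exact (boxProdLeft G H k).injective.extend_apply s 0 x
  · exact Function.extend_apply' _ _ _ fun ⟨y, hy⟩ => h (congrArg Prod.snd hy).symm

theorem extend_boxProdRight_apply [DecidableEq α] (a : α) (d : β → ℕ) (x : α) (k : β) :
    Function.extend (boxProdRight G H a) d 0 (x, k) = if x = a then d k else 0 := by
  split_ifs with h
  · subst h; exact (boxProdRight G H x).injective.extend_apply d 0 k
  · exact Function.extend_apply' _ _ _ fun ⟨y, hy⟩ => h (congrArg Prod.fst hy).symm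

variable [Fintype α]

def sliceSum (c : α × β → ℕ) (j : β) : ℕ :=
  ∑ x, c (x, j)

theorem sliceSum_add (c d : α × β → ℕ) (j : β) :
    sliceSum (c + d) j = sliceSum c j + sliceSum d j :=
  sum_add_distrib

theorem sliceSum_single [DecidableEq α] [DecidableEq β] (a : α) (i j : β) (n : ℕ) :
    sliceSum (Pi.single (a, i) n) j = if j = i then n else 0 := by
  by_cases h : j = i <;> simp [sliceSum, h, Pi.single_apply, Prod.ext_iff]

theorem exists_pebblingMove_sliceSum {c : α × β → ℕ} {i j : β} (hij : H.Adj i j)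
    (h : Fintype.card α < sliceSum c i) :
    ∃ c', PebblingMove (G □ H) c c' ∧ sliceSum c' i + 2 = sliceSum c i ∧
      sliceSum c' j = sliceSum c j + 1 ∧ ∀ k, k ≠ i → k ≠ j → sliceSum c' k = sliceSum c k := by
  classical
  obtain ⟨a, -, ha⟩ := exists_lt_of_sum_lt (s := univ) (f := fun _ => 1) (g := fun x => c (x, i))
    (by rwa [sum_const, card_univ, smul_eq_mul, mul_one])
  set c₀ := c - Pi.single (a, i) 2
  have hc : c = c₀ + Pi.single (a, i) 2 := by
    refine (tsub_add_cancel_of_le fun p => ?_).symm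
    by_cases hp : p = (a, i)
    · subst hp; simpa [Nat.succ_le_iff] using ha
    · simp [hp]
  have hmove : PebblingMove (G □ H) c (c₀ + Pi.single (a, j) 1) := by
    rw [hc]
    exact (PebblingMove.single (v := (a, i)) (w := (a, j))
      (boxProd_adj.2 (Or.inr ⟨hij, rfl⟩))).add_left c₀
  refine ⟨_, hmove, ?_⟩
  rw [hc]
  simp only [sliceSum_add, sliceSum_single, if_neg hij.ne, if_neg hij.ne']
  exact ⟨rfl, rfl, fun k hki hkj => by simp [hki, hkj]⟩

theorem exists_reflTransGen_transfer {S T : Finset β} (hST : Disjoint S T)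
    (hadj : ∀ i ∈ S, ∀ j ∈ T, H.Adj i j) {L U : β → ℕ} (hL : ∀ i ∈ S, Fintype.card α ≤ L i)
    {c : α × β → ℕ} (hLc : ∀ i ∈ S, L i ≤ sliceSum c i)
    (hbudget : ∑ j ∈ T, (U j - sliceSum c j) ≤ ∑ i ∈ S, (sliceSum c i - L i) / 2) :
    ∃ c', Relation.ReflTransGen (PebblingMove (G □ H)) c c' ∧ (∀ i ∈ S, L i ≤ sliceSum c' i) ∧
      (∀ j ∈ T, U j ≤ sliceSum c' j) ∧ ∀ k ∉ S, sliceSum c k ≤ sliceSum c' k := by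
  induction hN : ∑ j ∈ T, (U j - sliceSum c j) generalizing c with
  | zero =>
    refine ⟨c, .refl, hLc, fun j hj => ?_, fun _ _ => le_rfl⟩
    have := sum_eq_zero_iff.1 hN j hj
    omega
  | succ N ih =>
    obtain ⟨j, hjT, hj⟩ := exists_ne_zero_of_sum_ne_zero
      (s := T) (f := fun j => U j - sliceSum c j) (by omega)
    replace hj : sliceSum c j < U j := by omega
    obtain ⟨i, hiS, hi⟩ := exists_ne_zero_of_sum_ne_zero
      (s := S) (f := fun i => (sliceSum c i - L i) / 2) (by omega)
    replace hi : 2 ≤ sliceSum c i - L i := by omega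
    have hLi := hL i hiS
    obtain ⟨c₁, hmove, hci, hcj, hck⟩ :=
      exists_pebblingMove_sliceSum (G := G) (hadj i hiS j hjT) (c := c) (by omega)
    have hS : ∀ k ∈ S, k ≠ i → sliceSum c₁ k = sliceSum c k := fun k hk hki =>
      hck k hki fun hkj => disjoint_left.1 hST hk (hkj ▸ hjT)
    have hT : ∀ k ∈ T, k ≠ j → sliceSum c₁ k = sliceSum c k := fun k hk hkj =>
      hck k (fun hki => disjoint_left.1 hST (hki ▸ hiS) hk) hkj
    have hdemand := sum_eq_sum_add_one_of_eq_add_one hjT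
      (f := fun k => U k - sliceSum c k) (g := fun k => U k - sliceSum c₁ k) (by omega)
      fun k hk hkj => by rw [hT k hk hkj]
    have hsupply := sum_eq_sum_add_one_of_eq_add_one hiS
      (f := fun k => (sliceSum c k - L k) / 2) (g := fun k => (sliceSum c₁ k - L k) / 2)
      (by omega) fun k hk hki => by rw [hS k hk hki]
    have hLc₁ : ∀ k ∈ S, L k ≤ sliceSum c₁ k := fun k hk => by
      by_cases hki : k = i
      · subst hki; omega
      · rw [hS k hk hki]; exact hLc k hk
    obtain ⟨c', hc', hLc', hUc', hrest⟩ := ih hLc₁ (by omega) (by omega)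
    refine ⟨c', .head hmove hc', hLc', hUc', fun k hk => (hrest k hk).trans' ?_⟩
    by_cases hkj : k = j
    · subst hkj; omega
    · rw [hck k (ne_of_mem_of_not_mem hiS hk).symm hkj]

variable [Fintype β]

theorem solvable_boxProd_of_mul_le_sliceSum (hG : G.Connected) {c : α × β → ℕ} {d : β → ℕ}
    {rG : α} {rH : β} (hd : Solvable H d rH) (hc : ∀ j, pebblingNumber G * d j ≤ sliceSum c j) :
    Solvable (G □ H) c (rG, rH) := by
  classical
  choose s hs hsd using fun j => nsolvable_of_pebblingNumber_mul_le hG (hc j) rG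
  have hslices : c = ∑ j, Function.extend (boxProdLeft G H j) (fun x => c (x, j)) 0 := by
    ext ⟨x, k⟩
    simp [Finset.sum_apply, extend_boxProdLeft_apply]
  have hreach := PebblingMove.reflTransGen_sum univ fun j _ =>
    PebblingMove.reflTransGen_map (boxProdLeft G H j) (hs j)
  rw [← hslices] at hreach
  refine .of_reflTransGen hreach (NSolvable.mono (fun ⟨x, k⟩ => ?_) (hd.map (boxProdRight G H rG)))
  rw [extend_boxProdRight_apply, Finset.sum_apply]
  split_ifs with hx
  · subst hx
    refine (hsd k).trans (le_of_eq_of_le ?_ (single_le_sum (fun _ _ => Nat.zero_le _) (mem_univ k)))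
    simp [extend_boxProdLeft_apply]
  · exact Nat.zero_le _

end BoxProd

/-- constraint A.3(K, S, T) is valid: with `S` and `T` disjoint and completely
joined in `H`, if the total `G`-set count is at least `π(H) - |T|`, every slice indexed by
`S` is 1-saturated, and the extra pairs in `S`-slices suffice to complete a set at each
`T`-slice, then the configuration is solvable. -/
theorem stmt4 {α β : Type*} [Fintype α] [Fintype β]
    (G : SimpleGraph α) (H : SimpleGraph β) (hG : G.Connected) (hH : H.Connected)
    (c : α × β → ℕ) (rG : α) (rH : β)
    (S T : Finset β) (hST : Disjoint S T)
    (hadj : ∀ i ∈ S, ∀ j ∈ T, H.Adj i j)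
    -- (i) the total G-set count is at least π(H) - |T|
    (hsets : pebblingNumber H - T.card ≤ ∑ j : β, (∑ i : α, c (i, j)) / pebblingNumber G)
    -- (ii) every slice indexed by S is 1-saturated
    (hsat : ∀ i ∈ S, Fintype.card α
        ≤ (∑ i' : α, c (i', i)) - (∑ i' : α, c (i', i)) % pebblingNumber G)
    -- (iii) pairs among extras in S-slices suffice to complete a set at each T-slice
    (hpairs : ∑ j ∈ T, (pebblingNumber G - (∑ i : α, c (i, j)) % pebblingNumber G)
        ≤ ∑ i ∈ S, ((∑ i' : α, c (i', i)) % pebblingNumber G) / 2) :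
    Solvable (G.boxProd H) c (rG, rH) := by
  classical
  set π := pebblingNumber G
  have hslice : ∀ j, ∑ x, c (x, j) = sliceSum c j := fun _ => rfl
  simp only [hslice] at hsets hsat hpairs
  obtain ⟨c', hcc', hS, hT, hrest⟩ := exists_reflTransGen_transfer (G := G) hST hadj hsat
    (U := fun j => sliceSum c j + (π - sliceSum c j % π)) (fun i _ => Nat.sub_le _ _)
    (by simpa [Nat.sub_sub_self (Nat.mod_le _ _)] using hpairs)
  let d j := sliceSum c j / π + if j ∈ T then 1 else 0
  have hd : Solvable H d rH := by
    refine nsolvable_of_pebblingNumber_mul_le hH ?_ rH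
    simp only [d, sum_add_distrib, sum_ite_mem, univ_inter, sum_const, smul_eq_mul, mul_one]
    exact Nat.le_add_of_sub_le (by simpa using hsets)
  refine .of_reflTransGen hcc' (solvable_boxProd_of_mul_le_sliceSum hG hd fun j => ?_)
  change π * d j ≤ sliceSum c' j
  rcases Nat.eq_zero_or_pos π with hπ | hπ
  · simp [hπ]
  have hdiv := Nat.div_add_mod (sliceSum c j) π
  by_cases hjT : j ∈ T
  · have := Nat.mod_lt (sliceSum c j) hπ
    have := hT j hjT
    simp only [d, if_pos hjT, mul_add_one]
    omega
  · simp only [d, if_neg hjT, add_zero]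
    by_cases hjS : j ∈ S
    · have := hS j hjS
      omega
    · have := hrest j hjS
      omega
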